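/- For positive integers k ≤ n, a real α ≥ 1, and nonnegative reals x_1,…,x_n, the sum over all k-element subsets {i_1<…<i_k} of {1,…,n} of (x_{i_1}+…+x_{i_k})^α is at most C(n-1,k-1)·(x_1+…+x_n)^α. -/

import Mathlib

/-!
For `α ≥ 1` and `0 ≤ a ≤ S` we have `a ^ α = a * a ^ (α - 1) ≤ a * S ^ (α - 1)`, so with
`S = ∑ i, x i` the sum is bounded by `S ^ (α - 1) * ∑ s, ∑ i ∈ s, x i`. Each index lies in exactly
`C(n-1, k-1)` of the `k`-subsets, so the remaining double sum is `C(n-1, k-1) * S`.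
-/

open Finset

lemma Real.rpow_eq_mul_rpow_sub_one {a p : ℝ} (ha : 0 ≤ a) (hp : p ≠ 0) :
    a ^ p = a * a ^ (p - 1) := by
  conv_lhs => rw [show p = 1 + (p - 1) by ring]
  rw [Real.rpow_add' ha (by simpa using hp), Real.rpow_one]

lemma Real.rpow_le_mul_rpow_sub_one {a b p : ℝ} (ha : 0 ≤ a) (hab : a ≤ b) (hp : 1 ≤ p) :
    a ^ p ≤ a * b ^ (p - 1) := by
  rw [Real.rpow_eq_mul_rpow_sub_one ha (by linarith)]
  gcongr

lemma Finset.card_filter_mem_powersetCard {ι : Type*} [DecidableEq ι] {t : Finset ι} {i : ι}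
    (hi : i ∈ t) {k : ℕ} (hk : 0 < k) :
    #{s ∈ t.powersetCard k | i ∈ s} = (#t - 1).choose (k - 1) := by
  simpa using card_filter_powersetCard_subset {i} t k (by simpa using hi) (by rwa [card_singleton])

lemma Finset.sum_powersetCard_sum {ι M : Type*} [DecidableEq ι] [AddCommMonoid M]
    (t : Finset ι) {k : ℕ} (hk : 0 < k) (f : ι → M) :
    ∑ s ∈ t.powersetCard k, ∑ i ∈ s, f i = (#t - 1).choose (k - 1) • ∑ i ∈ t, f i := by
  rw [sum_comm' (t' := t) (s' := fun i ↦ {s ∈ t.powersetCard k | i ∈ s}), smul_sum]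
  · refine sum_congr rfl fun i hi ↦ ?_
    rw [sum_const, card_filter_mem_powersetCard hi hk]
  · intro s i
    simp only [mem_filter, mem_powersetCard]
    exact ⟨fun h ↦ ⟨h, h.1.1 h.2⟩, And.left⟩

theorem stmt1_general (n k : ℕ) (hk : 0 < k) (α : ℝ) (hα : 1 ≤ α)
    (x : Fin n → ℝ) (hx : ∀ i, 0 ≤ x i) :
    ∑ s ∈ Finset.powersetCard k (Finset.univ : Finset (Fin n)), (∑ i ∈ s, x i) ^ α ≤
      ((n - 1).choose (k - 1) : ℝ) * (∑ i, x i) ^ α := by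
  set S := ∑ i, x i
  have hS : 0 ≤ S := sum_nonneg fun i _ ↦ hx i
  calc ∑ s ∈ powersetCard k univ, (∑ i ∈ s, x i) ^ α
      ≤ ∑ s ∈ powersetCard k univ, (∑ i ∈ s, x i) * S ^ (α - 1) :=
        sum_le_sum fun s _ ↦ Real.rpow_le_mul_rpow_sub_one (sum_nonneg fun i _ ↦ hx i)
          (sum_le_univ_sum_of_nonneg hx) hα
    _ = ((n - 1).choose (k - 1) : ℝ) * S * S ^ (α - 1) := by
        rw [← sum_mul, sum_powersetCard_sum _ hk, card_univ, Fintype.card_fin, nsmul_eq_mul]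
    _ = ((n - 1).choose (k - 1) : ℝ) * S ^ α := by
        rw [mul_assoc, ← Real.rpow_eq_mul_rpow_sub_one hS (by linarith)]

theorem stmt1 (n k : ℕ) (hk : 0 < k) (hkn : k ≤ n) (α : ℝ) (hα : 1 ≤ α)
    (x : Fin n → ℝ) (hx : ∀ i, 0 ≤ x i) :
    ∑ s ∈ Finset.powersetCard k (Finset.univ : Finset (Fin n)), (∑ i ∈ s, x i) ^ α ≤
      ((n - 1).choose (k - 1) : ℝ) * (∑ i, x i) ^ α :=
  stmt1_general n k hk α hα x hx
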